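/- arXiv:2010.04327 — 2 statements merged into one kernel-verified Lean document; each statement's English description precedes it below -/
import Mathlib

section
/- Let x ∈ ℝ^n with all coordinates nonnegative and r_m = min_i x_i. Let K = {v : A v = b} with x ∈ K, and K₊ = K ∩ {v ≥ 0}. If ỹ ∈ ℝ^n satisfies ‖ỹ − x‖₁ ≤ r_m, then the Euclidean projection P(ỹ) of ỹ onto K is nonnegative and equals the Euclidean projection P₊(ỹ) of ỹ onto K₊. -/
/-- Euclidean (ℓ²) norm on `Fin n → ℝ`. -/
noncomputable def l2norm {n : ℕ} (y : Fin n → ℝ) : ℝ := Real.sqrt (∑ i, (y i) ^ 2)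

lemma sq_sum_le_of_l2 {n : ℕ} (a b : Fin n → ℝ) (h : l2norm a ≤ l2norm b) :
    ∑ i, (a i) ^ 2 ≤ ∑ i, (b i) ^ 2 := by
  have ha : 0 ≤ ∑ i, (a i) ^ 2 := Finset.sum_nonneg fun i _ => sq_nonneg _
  have hb : 0 ≤ ∑ i, (b i) ^ 2 := Finset.sum_nonneg fun i _ => sq_nonneg _
  unfold l2norm at h
  calc ∑ i, (a i) ^ 2 = Real.sqrt (∑ i, (a i) ^ 2) ^ 2 := (Real.sq_sqrt ha).symm
    _ ≤ Real.sqrt (∑ i, (b i) ^ 2) ^ 2 := pow_le_pow_left₀ (Real.sqrt_nonneg _) h 2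
    _ = ∑ i, (b i) ^ 2 := Real.sq_sqrt hb

theorem projection_nonneg_of_l1_close {n m : ℕ} (hn : 0 < n)
    (A : Matrix (Fin m) (Fin n) ℝ) (b : Fin m → ℝ)
    (x : Fin n → ℝ) (hxpos : ∀ i, 0 ≤ x i) (hxK : A.mulVec x = b)
    (K : Set (Fin n → ℝ)) (hK : K = {v | A.mulVec v = b})
    (Kp : Set (Fin n → ℝ)) (hKp : Kp = {v | A.mulVec v = b ∧ ∀ i, 0 ≤ v i})
    (P : (Fin n → ℝ) → (Fin n → ℝ))
    (hP : ∀ y, P y ∈ K ∧ ∀ v ∈ K, l2norm (P y - y) ≤ l2norm (v - y))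
    (Pp : (Fin n → ℝ) → (Fin n → ℝ))
    (hPp : ∀ y, Pp y ∈ Kp ∧ ∀ v ∈ Kp, l2norm (Pp y - y) ≤ l2norm (v - y))
    (yt : Fin n → ℝ) (hclose : ∑ i, |yt i - x i| ≤ ⨅ i, x i) :
    (∀ i, 0 ≤ P yt i) ∧ P yt = Pp yt := by
  haveI : Nonempty (Fin n) := ⟨⟨0, hn⟩⟩
  set p := P yt with hp
  have hpK : A.mulVec p = b := by have := (hP yt).1; rwa [hK] at this
  have hpmin := (hP yt).2
  -- orthogonality
  have horth : ∀ v : Fin n → ℝ, A.mulVec v = b →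
      ∑ i, (p i - yt i) * (v i - p i) = 0 := by
    intro v hv
    set c := ∑ i, (p i - yt i) * (v i - p i) with hc
    set d := ∑ i, (v i - p i) ^ 2 with hd
    have hdnn : 0 ≤ d := Finset.sum_nonneg fun i _ => sq_nonneg _
    have key : ∀ t : ℝ, 0 ≤ 2 * t * c + t ^ 2 * d := by
      intro t
      have hwK : A.mulVec (p + t • (v - p)) = b := by
        rw [Matrix.mulVec_add, Matrix.mulVec_smul, Matrix.mulVec_sub, hv, hpK]
        simp
      have hle : l2norm (p - yt) ≤ l2norm (p + t • (v - p) - yt) := by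
        apply hpmin
        rw [hK]; exact hwK
      have hsum := sq_sum_le_of_l2 _ _ hle
      have expand : ∑ i, ((p + t • (v - p) - yt) i) ^ 2
          = ∑ i, (((p i - yt i) ^ 2) + (2 * t * ((p i - yt i) * (v i - p i))
              + t ^ 2 * ((v i - p i) ^ 2))) := by
        apply Finset.sum_congr rfl
        intro i _
        simp only [Pi.add_apply, Pi.smul_apply, Pi.sub_apply, smul_eq_mul]
        ring
      rw [expand, Finset.sum_add_distrib, Finset.sum_add_distrib,
        ← Finset.mul_sum, ← Finset.mul_sum] at hsum
      simp only [Pi.sub_apply] at hsum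
      rw [← hc, ← hd] at hsum
      linarith
    have hdp : (0:ℝ) < d + 1 := by linarith
    have h1 := key (-c / (d + 1))
    have h2 : 0 ≤ (2 * (-c / (d + 1)) * c + (-c / (d + 1)) ^ 2 * d) * (d + 1) ^ 2 :=
      mul_nonneg h1 (sq_nonneg _)
    have h3 : (2 * (-c / (d + 1)) * c + (-c / (d + 1)) ^ 2 * d) * (d + 1) ^ 2
        = -(c ^ 2 * (d + 2)) := by
      field_simp
      ring
    rw [h3] at h2
    nlinarith [sq_nonneg c]
  -- Pythagoras
  have hpyth : ∀ v : Fin n → ℝ, A.mulVec v = b →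
      ∑ i, (v i - yt i) ^ 2 = ∑ i, (v i - p i) ^ 2 + ∑ i, (p i - yt i) ^ 2 := by
    intro v hv
    have hc := horth v hv
    have expand : ∑ i, (v i - yt i) ^ 2
        = ∑ i, ((v i - p i) ^ 2 + ((p i - yt i) ^ 2
            + 2 * ((p i - yt i) * (v i - p i)))) := by
      apply Finset.sum_congr rfl; intro i _; ring
    rw [expand, Finset.sum_add_distrib, Finset.sum_add_distrib, ← Finset.mul_sum, hc]
    ring
  -- bounds
  set r := ⨅ i, x i with hr
  have hrle : ∀ i, r ≤ x i := fun i => ciInf_le (Finite.bddBelow_range x) i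
  have hrnn : 0 ≤ r := le_ciInf fun i => hxpos i
  have hsum_abs_nn : 0 ≤ ∑ i, |yt i - x i| :=
    Finset.sum_nonneg fun i _ => abs_nonneg _
  have hl1 : ∑ i, (x i - yt i) ^ 2 ≤ r ^ 2 := by
    have h1 : ∑ i, (x i - yt i) ^ 2 ≤ (∑ i, |yt i - x i|) ^ 2 := by
      have : ∀ i ∈ Finset.univ, (x i - yt i) ^ 2 = |yt i - x i| ^ 2 := by
        intro i _; rw [sq_abs]; ring
      rw [Finset.sum_congr rfl this]
      exact Finset.sum_sq_le_sq_sum_of_nonneg fun i _ => abs_nonneg _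
    have h2 : (∑ i, |yt i - x i|) ^ 2 ≤ r ^ 2 := pow_le_pow_left₀ hsum_abs_nn hclose 2
    linarith
  have hdist : ∑ i, (x i - p i) ^ 2 ≤ r ^ 2 := by
    have := hpyth x hxK
    have hnn : 0 ≤ ∑ i, (p i - yt i) ^ 2 := Finset.sum_nonneg fun i _ => sq_nonneg _
    linarith
  have hnonneg : ∀ i, 0 ≤ p i := by
    intro i
    have h1 : (x i - p i) ^ 2 ≤ ∑ j, (x j - p j) ^ 2 :=
      Finset.single_le_sum (f := fun j => (x j - p j) ^ 2)
        (fun j _ => sq_nonneg _) (Finset.mem_univ i)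
    have h2 : (x i - p i) ^ 2 ≤ r ^ 2 := le_trans h1 hdist
    have h3 := hrle i
    nlinarith
  have hpKp : p ∈ Kp := by rw [hKp]; exact ⟨hpK, hnonneg⟩
  refine ⟨hnonneg, ?_⟩
  -- uniqueness
  set q := Pp yt with hq
  have hqKp : q ∈ Kp := (hPp yt).1
  have hqK : A.mulVec q = b := by rw [hKp] at hqKp; exact hqKp.1
  have hle : l2norm (q - yt) ≤ l2norm (p - yt) := (hPp yt).2 p hpKp
  have hsum := sq_sum_le_of_l2 _ _ hle
  simp only [Pi.sub_apply] at hsum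
  have hpy := hpyth q hqK
  have hzero : ∑ i, (q i - p i) ^ 2 ≤ 0 := by linarith
  have hzero' : ∑ i, (q i - p i) ^ 2 = 0 :=
    le_antisymm hzero (Finset.sum_nonneg fun i _ => sq_nonneg _)
  have : ∀ i ∈ Finset.univ, (q i - p i) ^ 2 = 0 :=
    (Finset.sum_eq_zero_iff_of_nonneg fun i _ => sq_nonneg _).mp hzero'
  funext i
  have := this i (Finset.mem_univ i)
  have : q i - p i = 0 := by
    have := sq_eq_zero_iff.mp this
    exact this
  linarith
end

section
/- Let x ∈ ℝ^n with x ≥ 0, A x = b, r_m = min_i x_i, and let K₊ = {v : A v = b, v ≥ 0} be bounded with C' = sup_{v∈K₊} ‖v − x‖_∞ < ∞. Let X̃ = x + η with η having i.i.d. Laplace(λ) coordinates, and let P₊ be the Euclidean projection onto K₊. Then ‖E[P₊(X̃) − x]‖_∞ ≤ C' · exp(−r_m/λ) · Σ_{i=0}^{n−1} r_m^i/(i!·λ^i). -/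
open MeasureTheory ProbabilityTheory

/-- The Laplace distribution with location 0 and scale `l`. -/
noncomputable def laplaceMeasure (l : ℝ) : Measure ℝ :=
  volume.withDensity (fun x => ENNReal.ofReal ((2 * l)⁻¹ * Real.exp (-|x| / l)))

/-!
Put `r = min xᵢ` and let `P` be the orthogonal projection onto `ker A`. On the event
`‖η‖₁ ≤ r` the point `x + P η` is nonnegative (its coordinates differ from those of `x` by at
most `‖P η‖₂ ≤ ‖η‖₁ ≤ r`) and is the point of the affine space `{v | A v = b}` nearest to
`x + η`, so it is the projection of `x + η` onto `K₊`. Since `η ↦ 1{‖η‖₁ ≤ r} P η` is odd and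
the Laplace law is symmetric, this part contributes nothing to the mean, while off the event
`‖P₊(x + η) - x‖_∞ ≤ C`. Hence the bias is at most `C · P(‖η‖₁ > r)`, and `‖η‖₁` is a sum of
`n` independent exponential variables of mean `λ`, whose tail `erlangTail` is computed by
induction on `n`.
-/

open Set Real Matrix

section ErlangTail

variable {l : ℝ}

noncomputable def erlangTail (l : ℝ) (n : ℕ) (r : ℝ) : ℝ :=
  if r < 0 then 1 else exp (-r / l) * ∑ k ∈ Finset.range n, r ^ k / (k.factorial * l ^ k)

lemma erlangTail_of_neg {r : ℝ} (hr : r < 0) (n : ℕ) : erlangTail l n r = 1 := if_pos hr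

lemma erlangTail_of_nonneg {r : ℝ} (hr : 0 ≤ r) (n : ℕ) :
    erlangTail l n r = exp (-r / l) * ∑ k ∈ Finset.range n, r ^ k / (k.factorial * l ^ k) :=
  if_neg hr.not_gt

lemma erlangTail_nonneg (hl : 0 ≤ l) (n : ℕ) (r : ℝ) : 0 ≤ erlangTail l n r := by
  rcases lt_or_ge r 0 with hr | hr
  · simp [erlangTail_of_neg hr]
  · rw [erlangTail_of_nonneg hr]
    positivity

lemma erlangTail_le_one (hl : 0 ≤ l) (n : ℕ) (r : ℝ) : erlangTail l n r ≤ 1 := by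
  rcases lt_or_ge r 0 with hr | hr
  · rw [erlangTail_of_neg hr]
  have hsum : ∑ k ∈ Finset.range n, r ^ k / (k.factorial * l ^ k) ≤ exp (r / l) := by
    simpa only [div_pow, div_div, mul_comm] using sum_le_exp_of_nonneg (div_nonneg hr hl) n
  calc erlangTail l n r ≤ exp (-r / l) * exp (r / l) := by
        rw [erlangTail_of_nonneg hr]; gcongr
    _ = 1 := by rw [← exp_add, neg_div, neg_add_cancel, exp_zero]

lemma measurable_erlangTail (l : ℝ) (n : ℕ) : Measurable (erlangTail l n) :=
  Measurable.ite measurableSet_Iio measurable_const (by fun_prop)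

lemma integral_exp_neg_div_Ioi (hl : 0 < l) (a : ℝ) :
    ∫ s in Ioi a, exp (-s / l) = l * exp (-a / l) := by
  have h := integral_exp_mul_Ioi (neg_lt_zero.2 (inv_pos.2 hl)) a
  simp only [neg_mul, ← div_eq_inv_mul, neg_div_neg_eq, div_inv_eq_mul] at h
  simp only [neg_div, h]; ring

lemma integrableOn_exp_neg_div_Ioi (hl : 0 < l) (a : ℝ) :
    IntegrableOn (fun s => exp (-s / l)) (Ioi a) := by
  simpa only [neg_div, div_eq_inv_mul, neg_mul, mul_neg] using
    exp_neg_integrableOn_Ioi a (inv_pos.2 hl)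

lemma integral_Ioc_sub_pow_div (hl : l ≠ 0) {r : ℝ} (hr : 0 ≤ r) (k : ℕ) :
    ∫ s in Ioc 0 r, (r - s) ^ k / (k.factorial * l ^ k)
      = l * (r ^ (k + 1) / ((k + 1).factorial * l ^ (k + 1))) := by
  rw [integral_div, ← intervalIntegral.integral_of_le hr,
    intervalIntegral.integral_comp_sub_left (fun s => s ^ k), sub_self, sub_zero, integral_pow,
    Nat.factorial_succ]
  push_cast
  field_simp
  ring

lemma integral_exp_mul_erlangTail_sub (hl : 0 < l) (n : ℕ) (r : ℝ) :
    ∫ s in Ioi 0, exp (-s / l) * erlangTail l n (r - s) = l * erlangTail l (n + 1) r := by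
  have tail_eq : ∀ s ∈ Ioi r, exp (-s / l) * erlangTail l n (r - s) = exp (-s / l) :=
    fun s hs => by rw [erlangTail_of_neg (sub_neg.2 hs), mul_one]
  rcases lt_or_ge r 0 with hr | hr
  · rw [setIntegral_congr_fun measurableSet_Ioi fun s hs => tail_eq s (hr.trans hs),
      integral_exp_neg_div_Ioi hl, erlangTail_of_neg hr, neg_zero, zero_div, exp_zero]
  have head_eq : EqOn (fun s => exp (-s / l) * erlangTail l n (r - s))
      (fun s => exp (-r / l) * ∑ k ∈ Finset.range n, (r - s) ^ k / (k.factorial * l ^ k))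
      (Ioc 0 r) := fun s hs => by
    dsimp only
    rw [erlangTail_of_nonneg (sub_nonneg.2 hs.2), ← mul_assoc, ← exp_add]
    ring_nf
  have head_int : IntegrableOn (fun s => exp (-s / l) * erlangTail l n (r - s)) (Ioc 0 r) :=
    (Continuous.integrableOn_Ioc (by fun_prop)).congr_fun head_eq.symm measurableSet_Ioc
  have tail_int : IntegrableOn (fun s => exp (-s / l) * erlangTail l n (r - s)) (Ioi r) :=
    (integrableOn_exp_neg_div_Ioi hl r).congr_fun (fun s hs => (tail_eq s hs).symm)
      measurableSet_Ioi
  rw [← Ioc_union_Ioi_eq_Ioi hr, setIntegral_union (Ioc_disjoint_Ioi le_rfl) measurableSet_Ioi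
      head_int tail_int, setIntegral_congr_fun measurableSet_Ioc head_eq,
    setIntegral_congr_fun measurableSet_Ioi tail_eq, integral_exp_neg_div_Ioi hl,
    integral_const_mul,
    integral_finsetSum _ fun k _ => (by fun_prop : Continuous _).integrableOn_Ioc]
  simp only [integral_Ioc_sub_pow_div hl.ne' hr, ← Finset.mul_sum]
  rw [erlangTail_of_nonneg hr, Finset.sum_range_succ']
  simp only [pow_zero, Nat.factorial_zero, Nat.cast_one, mul_one, div_one]
  ring

end ErlangTail

section Laplace

variable {l : ℝ}

lemma integral_laplaceMeasure_comp_abs (hl : 0 ≤ l) (f : ℝ → ℝ) :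
    ∫ t, f |t| ∂laplaceMeasure l = l⁻¹ * ∫ s in Ioi 0, exp (-s / l) * f s := by
  have density : ∀ t : ℝ, (ENNReal.ofReal ((2 * l)⁻¹ * exp (-|t| / l))).toReal
      = (2 * l)⁻¹ * exp (-|t| / l) := fun t => ENNReal.toReal_ofReal (by positivity)
  have fold := integral_comp_abs (f := fun s => (2 * l)⁻¹ * exp (-s / l) * f s)
  rw [laplaceMeasure, integral_withDensity_eq_integral_toReal_smul (by fun_prop)
    (ae_of_all _ fun _ => ENNReal.ofReal_lt_top)]
  simp only [density, smul_eq_mul, mul_assoc] at fold ⊢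
  rw [fold, integral_const_mul]
  ring

lemma isProbabilityMeasure_laplaceMeasure (hl : 0 < l) :
    IsProbabilityMeasure (laplaceMeasure l) := by
  have h := integral_laplaceMeasure_comp_abs hl.le fun _ => 1
  simp only [integral_const, smul_eq_mul, mul_one, integral_exp_neg_div_Ioi hl, neg_zero,
    zero_div, exp_zero, inv_mul_cancel₀ hl.ne'] at h
  exact ⟨(ENNReal.toReal_eq_one_iff _).1 h⟩

instance laplaceMeasure.isNegInvariant (l : ℝ) : (laplaceMeasure l).IsNegInvariant := by
  refine ⟨Measure.ext fun s hs => ?_⟩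
  have hneg :=
    (Measure.measurePreserving_neg (volume : Measure ℝ)).setLIntegral_comp_preimage_emb
      (Homeomorph.neg ℝ).measurableEmbedding
      (fun t => ENNReal.ofReal ((2 * l)⁻¹ * exp (-|t| / l))) s
  simp only [abs_neg] at hneg
  rw [Measure.neg, Measure.map_apply measurable_neg hs, laplaceMeasure,
    withDensity_apply _ (measurable_neg hs), withDensity_apply _ hs]
  exact hneg

end Laplace

lemma pi_laplaceMeasure_lt_sum_abs {l : ℝ} (hl : 0 < l) (n : ℕ) (r : ℝ) :
    Measure.pi (fun _ : Fin n => laplaceMeasure l) {y | r < ∑ i, |y i|}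
      = ENNReal.ofReal (erlangTail l n r) := by
  have := isProbabilityMeasure_laplaceMeasure hl
  induction n generalizing r with
  | zero =>
    rcases lt_or_ge r 0 with hr | hr
    · simp [hr, erlangTail_of_neg hr]
    · simp [hr.not_gt, erlangTail_of_nonneg hr]
  | succ n ih =>
    have hpre : (MeasurableEquiv.piFinSuccAbove (fun _ : Fin (n + 1) => ℝ) 0).symm ⁻¹'
        {y | r < ∑ i, |y i|} = {p : ℝ × (Fin n → ℝ) | r - |p.1| < ∑ j, |p.2 j|} := by
      ext p
      simp [Fin.sum_univ_succ, sub_lt_iff_lt_add']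
    have hint : Integrable (fun t => erlangTail l n (r - |t|)) (laplaceMeasure l) :=
      .of_bound ((measurable_erlangTail l n).comp (by fun_prop)).aestronglyMeasurable 1
        (ae_of_all _ fun t => by
          rw [Real.norm_of_nonneg (erlangTail_nonneg hl.le n _)]
          exact erlangTail_le_one hl.le n _)
    rw [← ((measurePreserving_piFinSuccAbove (fun _ => laplaceMeasure l) 0).symm).measure_preimage
      (measurableSet_lt measurable_const (by fun_prop)).nullMeasurableSet, hpre,
      Measure.prod_apply (measurableSet_lt (by fun_prop) (by fun_prop))]
    change ∫⁻ t, Measure.pi _ {y | r - |t| < ∑ j, |y j|} ∂laplaceMeasure l = _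
    simp_rw [ih]
    rw [← ofReal_integral_eq_lintegral_ofReal hint
      (ae_of_all _ fun t => erlangTail_nonneg hl.le n _),
      integral_laplaceMeasure_comp_abs hl.le fun s => erlangTail l n (r - s),
      integral_exp_mul_erlangTail_sub hl, inv_mul_cancel_left₀ hl.ne']

section Projection

variable {𝕜 E : Type*} [RCLike 𝕜] [NormedAddCommGroup E] [InnerProductSpace 𝕜 E]

theorem Submodule.starProjection_eq_of_norm_sub_le (K : Submodule 𝕜 E) [K.HasOrthogonalProjection]
    {u v : E} (hv : v ∈ K) (h : ‖u - v‖ ≤ ‖u - K.starProjection u‖) :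
    K.starProjection u = v := by
  refine K.eq_starProjection_of_mem_of_inner_eq_zero hv ((K.norm_eq_iInf_iff_inner_eq_zero hv).1
    (le_antisymm (K.starProjection_minimal u ▸ h)
      (ciInf_le (f := fun w : K => ‖u - w‖) ⟨0, ?_⟩ ⟨v, hv⟩)))
  rintro _ ⟨w, rfl⟩
  exact norm_nonneg _

theorem eq_add_starProjection_of_forall_norm_le (V : Submodule 𝕜 E) [V.HasOrthogonalProjection]
    {K : Set E} {x z p : E} (hp : p - x ∈ V) (hw : x + V.starProjection z ∈ K)
    (hmin : ∀ v ∈ K, ‖p - (x + z)‖ ≤ ‖v - (x + z)‖) : p = x + V.starProjection z := by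
  have h := hmin _ hw
  rw [show p - (x + z) = -(z - (p - x)) by abel, norm_neg,
    show x + V.starProjection z - (x + z) = -(z - V.starProjection z) by abel, norm_neg] at h
  rw [V.starProjection_eq_of_norm_sub_le hp h]
  abel

end Projection

lemma EuclideanSpace.norm_le_sum_abs {ι : Type*} [Fintype ι] (z : EuclideanSpace ℝ ι) :
    ‖z‖ ≤ ∑ i, |z i| := by
  rw [EuclideanSpace.norm_eq, Real.sqrt_le_left (by positivity)]
  simpa only [Real.norm_eq_abs] using
    Finset.sum_sq_le_sq_sum_of_nonneg fun i _ => abs_nonneg (z i)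

lemma l2norm_eq_norm_toLp {n : ℕ} (y : Fin n → ℝ) : l2norm y = ‖WithLp.toLp 2 y‖ := by
  simp [l2norm, EuclideanSpace.norm_eq, sq_abs]

section KernelProjection

variable {ι κ : Type*} [Fintype ι] [DecidableEq ι] (A : Matrix κ ι ℝ)

noncomputable def Matrix.kerProjection :
    EuclideanSpace ℝ ι →L[ℝ] EuclideanSpace ℝ ι :=
  (LinearMap.ker (Matrix.toEuclideanLin A)).starProjection

lemma Matrix.mulVec_kerProjection [Fintype κ] (z : EuclideanSpace ℝ ι) :
    A *ᵥ (A.kerProjection z).ofLp = 0 := by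
  have h := (LinearMap.ker (Matrix.toEuclideanLin A)).starProjection_apply_mem z
  rw [LinearMap.mem_ker, Matrix.toLpLin_apply] at h
  exact congrArg WithLp.ofLp h

lemma Matrix.abs_kerProjection_apply_le (z : EuclideanSpace ℝ ι) (i : ι) :
    |A.kerProjection z i| ≤ ∑ j, |z j| :=
  calc |A.kerProjection z i| ≤ ‖A.kerProjection z‖ :=
        (Real.norm_eq_abs _).symm.trans_le (PiLp.norm_apply_le _ i)
    _ ≤ ‖z‖ := Submodule.norm_starProjection_apply_le _ z
    _ ≤ ∑ j, |z j| := EuclideanSpace.norm_le_sum_abs z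

noncomputable def Matrix.truncKerProjection (r : ℝ) (z : ι → ℝ) : ι → ℝ :=
  if ∑ i, |z i| ≤ r then (A.kerProjection (WithLp.toLp 2 z)).ofLp else 0

lemma Matrix.truncKerProjection_of_le {r : ℝ} {z : ι → ℝ} (hz : ∑ i, |z i| ≤ r) :
    A.truncKerProjection r z = (A.kerProjection (WithLp.toLp 2 z)).ofLp :=
  if_pos hz

lemma Matrix.truncKerProjection_of_lt {r : ℝ} {z : ι → ℝ} (hz : r < ∑ i, |z i|) :
    A.truncKerProjection r z = 0 :=
  if_neg hz.not_ge

lemma Matrix.truncKerProjection_neg (r : ℝ) (z : ι → ℝ) :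
    A.truncKerProjection r (-z) = -A.truncKerProjection r z := by
  by_cases hz : ∑ i, |z i| ≤ r <;> simp [truncKerProjection, hz]

lemma Matrix.integrable_truncKerProjection {r : ℝ} (hr : 0 ≤ r) (ν : Measure (ι → ℝ))
    [IsFiniteMeasure ν] : Integrable (A.truncKerProjection r) ν := by
  refine .of_bound (Measurable.ite (measurableSet_le (by fun_prop) measurable_const)
    (by fun_prop) measurable_const).aestronglyMeasurable r (ae_of_all _ fun z => ?_)
  rcases le_or_gt (∑ i, |z i|) r with hz | hz
  · rw [A.truncKerProjection_of_le hz, pi_norm_le_iff_of_nonneg hr]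
    exact fun i => (A.abs_kerProjection_apply_le _ i).trans hz
  · rwa [A.truncKerProjection_of_lt hz, norm_zero]

end KernelProjection

lemma projection_eq_add_kerProjection {m n : ℕ} {A : Matrix (Fin m) (Fin n) ℝ} {b : Fin m → ℝ}
    {x : Fin n → ℝ} (hxK : A *ᵥ x = b) {Kp : Set (Fin n → ℝ)}
    (hKp : Kp = {v | A *ᵥ v = b ∧ ∀ i, 0 ≤ v i}) {Pp : (Fin n → ℝ) → (Fin n → ℝ)}
    (hPp : ∀ y, Pp y ∈ Kp ∧ ∀ v ∈ Kp, l2norm (Pp y - y) ≤ l2norm (v - y))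
    {z : Fin n → ℝ} (hz : ∀ i, ∑ j, |z j| ≤ x i) :
    Pp (x + z) = x + (A.kerProjection (WithLp.toLp 2 z)).ofLp := by
  subst hKp
  have hw : x + (A.kerProjection (WithLp.toLp 2 z)).ofLp ∈ {v | A *ᵥ v = b ∧ ∀ i, 0 ≤ v i} := by
    refine ⟨by rw [Matrix.mulVec_add, hxK, A.mulVec_kerProjection, add_zero], fun i => ?_⟩
    have hPz := (abs_le.1 (A.abs_kerProjection_apply_le (WithLp.toLp 2 z) i)).1
    simp only [Pi.add_apply]
    linarith [hz i]
  have hp : WithLp.toLp 2 (Pp (x + z)) - WithLp.toLp 2 x ∈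
      LinearMap.ker (Matrix.toEuclideanLin A) := by
    rw [LinearMap.mem_ker, Matrix.toLpLin_apply]
    simp [Matrix.mulVec_sub, (hPp (x + z)).1.1, hxK]
  have hnearest := eq_add_starProjection_of_forall_norm_le _ hp
    (K := WithLp.ofLp ⁻¹' {v | A *ᵥ v = b ∧ ∀ i, 0 ≤ v i}) hw
    fun v hv => by simpa [l2norm_eq_norm_toLp] using (hPp (x + z)).2 _ hv
  exact congrArg WithLp.ofLp hnearest

section OddIntegral

variable {Ω E F : Type*} [MeasurableSpace Ω] [MeasurableSpace E] [AddGroup E] [MeasurableNeg E]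
  [NormedAddCommGroup F] [NormedSpace ℝ F]

theorem integral_eq_zero_of_odd (ν : Measure E) [ν.IsNegInvariant] {g : E → F}
    (hg : ∀ z, g (-z) = -g z) : ∫ z, g z ∂ν = 0 := by
  have h := integral_neg_eq_self g ν
  simp only [hg, integral_neg] at h
  rw [eq_comm, ← sub_eq_zero, sub_neg_eq_add, ← two_smul ℝ, smul_eq_zero] at h
  exact h.resolve_left two_ne_zero

theorem norm_integral_le_of_eq_odd_off {μ : Measure Ω} [IsFiniteMeasure μ] {ν : Measure E}
    [ν.IsNegInvariant] {X : Ω → E} (hX : Measurable X) (hXν : μ.map X = ν) {G : E → F}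
    (hG : Integrable G ν) (hodd : ∀ z, G (-z) = -G z) {f : Ω → F} (hf : Integrable f μ)
    {S : Set E} (hS : MeasurableSet S) {C : ℝ} (heq : ∀ ω, X ω ∉ S → f ω = G (X ω))
    (hC : ∀ ω, X ω ∈ S → ‖f ω - G (X ω)‖ ≤ C) :
    ‖∫ ω, f ω ∂μ‖ ≤ C * ν.real S := by
  subst hXν
  have hGX : ∫ ω, G (X ω) ∂μ = 0 := by
    rw [← integral_map hX.aemeasurable hG.aestronglyMeasurable]
    exact integral_eq_zero_of_odd _ hodd
  rw [← sub_zero (∫ ω, f ω ∂μ), ← hGX,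
    ← integral_sub (g := fun ω => G (X ω)) hf (hG.comp_measurable hX),
    ← setIntegral_eq_integral_of_forall_compl_eq_zero (s := X ⁻¹' S)
      fun ω hω => sub_eq_zero.2 (heq ω hω), map_measureReal_apply hX hS]
  exact norm_setIntegral_le_of_norm_le_const (measure_lt_top _ _) hC

end OddIntegral

lemma norm_sub_le_of_isLUB {ι : Type*} [Fintype ι] {K : Set (ι → ℝ)} {x : ι → ℝ} {C : ℝ}
    (hC : IsLUB {c | ∃ v ∈ K, c = ⨆ i, |v i - x i|} C) {v : ι → ℝ} (hv : v ∈ K) :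
    ‖v - x‖ ≤ C := by
  refine ((pi_norm_le_iff_of_nonneg (Real.iSup_nonneg fun i => abs_nonneg _)).2 fun i => ?_).trans
    (hC.1 ⟨v, hv, rfl⟩)
  exact le_ciSup (f := fun i => |v i - x i|) (Set.finite_range _).bddAbove i

theorem bias_bound_nonneg_projection_general {Ω : Type*} [MeasurableSpace Ω]
    (μ : Measure Ω) [IsProbabilityMeasure μ] {n m : ℕ}
    (A : Matrix (Fin m) (Fin n) ℝ) (b : Fin m → ℝ)
    (x : Fin n → ℝ) (hxpos : ∀ i, 0 ≤ x i) (hxK : A.mulVec x = b)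
    (Kp : Set (Fin n → ℝ)) (hKp : Kp = {v | A.mulVec v = b ∧ ∀ i, 0 ≤ v i})
    (C : ℝ) (hC : IsLUB {c | ∃ v ∈ Kp, c = ⨆ i, |v i - x i|} C)
    (l : ℝ) (hl : 0 < l)
    (η : Fin n → Ω → ℝ)
    (hmeas : ∀ i, Measurable (η i))
    (hindep : iIndepFun η μ)
    (hlap : ∀ i, μ.map (η i) = laplaceMeasure l)
    (Pp : (Fin n → ℝ) → (Fin n → ℝ))
    (hPp : ∀ y, Pp y ∈ Kp ∧ ∀ v ∈ Kp, l2norm (Pp y - y) ≤ l2norm (v - y)) :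
    (⨆ i, |(∫ ω, (Pp (fun j => x j + η j ω) - x) ∂μ) i|) ≤
      C * Real.exp (-(⨅ i, x i) / l) *
        ∑ k ∈ Finset.range n, (⨅ i, x i) ^ k / (k.factorial * l ^ k) := by
  set r := ⨅ i, x i
  have hr0 : 0 ≤ r := Real.iInf_nonneg hxpos
  have hC0 : 0 ≤ C :=
    (norm_nonneg _).trans (norm_sub_le_of_isLUB hC (hKp ▸ ⟨hxK, hxpos⟩ : x ∈ Kp))
  have := isProbabilityMeasure_laplaceMeasure hl
  have hlaw : μ.map (fun ω i => η i ω) = Measure.pi fun _ => laplaceMeasure l := by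
    rw [hindep.map_fun_eq_pi_map fun i => (hmeas i).aemeasurable]
    simp_rw [hlap]
  have hbias : ‖∫ ω, (Pp (x + fun j => η j ω) - x) ∂μ‖ ≤ C * erlangTail l n r := by
    by_cases hf : Integrable (fun ω => Pp (x + fun j => η j ω) - x) μ
    · rw [← ENNReal.toReal_ofReal (erlangTail_nonneg hl.le n r), ← pi_laplaceMeasure_lt_sum_abs hl]
      refine norm_integral_le_of_eq_odd_off (measurable_pi_lambda _ hmeas) hlaw
        (A.integrable_truncKerProjection hr0 _) (A.truncKerProjection_neg r) hf
        (measurableSet_lt measurable_const (by fun_prop)) (fun ω hω => ?_) (fun ω hω => ?_)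
      · replace hω : ∑ i, |η i ω| ≤ r := not_lt.1 hω
        rw [A.truncKerProjection_of_le hω, projection_eq_add_kerProjection hxK hKp hPp
          fun i => hω.trans (ciInf_le (Set.finite_range x).bddBelow i), add_sub_cancel_left]
      · rw [A.truncKerProjection_of_lt hω, sub_zero]
        exact norm_sub_le_of_isLUB hC (hPp _).1
    · rw [integral_undef hf, norm_zero]
      exact mul_nonneg hC0 (erlangTail_nonneg hl.le n r)
  rw [mul_assoc, ← erlangTail_of_nonneg hr0]
  exact Real.iSup_le (fun i => (norm_le_pi_norm _ i).trans hbias)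
    (mul_nonneg hC0 (erlangTail_nonneg hl.le n r))

theorem bias_bound_nonneg_projection {Ω : Type*} [MeasurableSpace Ω]
    (μ : Measure Ω) [IsProbabilityMeasure μ] {n m : ℕ} (hn : 0 < n)
    (A : Matrix (Fin m) (Fin n) ℝ) (b : Fin m → ℝ)
    (x : Fin n → ℝ) (hxpos : ∀ i, 0 ≤ x i) (hxK : A.mulVec x = b)
    (Kp : Set (Fin n → ℝ)) (hKp : Kp = {v | A.mulVec v = b ∧ ∀ i, 0 ≤ v i})
    (hbdd : Bornology.IsBounded Kp)
    (C : ℝ) (hC : IsLUB {c | ∃ v ∈ Kp, c = ⨆ i, |v i - x i|} C)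
    (l : ℝ) (hl : 0 < l)
    (η : Fin n → Ω → ℝ)
    (hmeas : ∀ i, Measurable (η i))
    (hindep : iIndepFun η μ)
    (hlap : ∀ i, μ.map (η i) = laplaceMeasure l)
    (Pp : (Fin n → ℝ) → (Fin n → ℝ))
    (hPp : ∀ y, Pp y ∈ Kp ∧ ∀ v ∈ Kp, l2norm (Pp y - y) ≤ l2norm (v - y)) :
    (⨆ i, |(∫ ω, (Pp (fun j => x j + η j ω) - x) ∂μ) i|) ≤
      C * Real.exp (-(⨅ i, x i) / l) *
        ∑ k ∈ Finset.range n, (⨅ i, x i) ^ k / (k.factorial * l ^ k) :=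
  bias_bound_nonneg_projection_general μ A b x hxpos hxK Kp hKp C hC l hl η hmeas hindep hlap Pp hPp
end
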